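/- arXiv:1807.10613 — 2 statements merged into one kernel-verified Lean document; each statement's English description precedes it below -/
import Mathlib

section
/- (Gallai–Milgram, strong form) If P is a path partition of an undirected graph G that is minimal (no path partition of G has fewer paths), then there exists an independent set S of G containing exactly one vertex from each path of P. -/
open SimpleGraph

variable {V : Type*}

/-- A walk is an induced path: it is a path and every adjacency between its
vertices is an edge of the walk. -/
def IsInducedWalk (G : SimpleGraph V) {u v : V} (p : G.Walk u v) : Prop :=
  p.IsPath ∧ ∀ a ∈ p.support, ∀ b ∈ p.support, G.Adj a b → s(a, b) ∈ p.edges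

/-- A walk is an isometric (shortest) path between its endpoints. -/
def IsIsometricWalk (G : SimpleGraph V) {u v : V} (p : G.Walk u v) : Prop :=
  p.IsPath ∧ p.length = G.dist u v

/-- A family of walks is a path cover: each walk is a path and every
vertex lies on at least one of the walks. -/
def IsPathCover (G : SimpleGraph V) {n : ℕ}
    (P : Fin n → Σ u : V, Σ v : V, G.Walk u v) : Prop :=
  (∀ i, (P i).2.2.IsPath) ∧ ∀ x : V, ∃ i, x ∈ (P i).2.2.support

/-- A family of walks is a path partition: each walk is a path and every
vertex lies on exactly one of the walks. -/
def IsPathPartition (G : SimpleGraph V) {n : ℕ}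
    (P : Fin n → Σ u : V, Σ v : V, G.Walk u v) : Prop :=
  (∀ i, (P i).2.2.IsPath) ∧ ∀ x : V, ∃! i, x ∈ (P i).2.2.support

/-- π_c : the path cover number. -/
noncomputable def pathCoverNum (G : SimpleGraph V) : ℕ :=
  sInf {n | ∃ P : Fin n → Σ u : V, Σ v : V, G.Walk u v, IsPathCover G P}

/-- ρ_c : the induced path cover number. -/
noncomputable def inducedPathCoverNum (G : SimpleGraph V) : ℕ :=
  sInf {n | ∃ P : Fin n → Σ u : V, Σ v : V, G.Walk u v,
    IsPathCover G P ∧ ∀ i, IsInducedWalk G (P i).2.2}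

/-- ip_c : the isometric path cover number. -/
noncomputable def isometricPathCoverNum (G : SimpleGraph V) : ℕ :=
  sInf {n | ∃ P : Fin n → Σ u : V, Σ v : V, G.Walk u v,
    IsPathCover G P ∧ ∀ i, IsIsometricWalk G (P i).2.2}

/-- π_p : the path partition number. -/
noncomputable def pathPartitionNum (G : SimpleGraph V) : ℕ :=
  sInf {n | ∃ P : Fin n → Σ u : V, Σ v : V, G.Walk u v, IsPathPartition G P}

/-- ρ_p : the induced path partition number. -/
noncomputable def inducedPathPartitionNum (G : SimpleGraph V) : ℕ :=
  sInf {n | ∃ P : Fin n → Σ u : V, Σ v : V, G.Walk u v,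
    IsPathPartition G P ∧ ∀ i, IsInducedWalk G (P i).2.2}

/-- ip_p : the isometric path partition number. -/
noncomputable def isometricPathPartitionNum (G : SimpleGraph V) : ℕ :=
  sInf {n | ∃ P : Fin n → Σ u : V, Σ v : V, G.Walk u v,
    IsPathPartition G P ∧ ∀ i, IsIsometricWalk G (P i).2.2}


/-!
In a minimum path partition of an undirected graph the first vertices of the paths are already
pairwise non-adjacent: if the first vertices of two different paths were adjacent, reversing one
of them and continuing through that edge along the other would merge the two paths into one,
giving a path partition with fewer paths.
-/

namespace SimpleGraph.Walk

variable {V : Type*} {G : SimpleGraph V} {a b c d : V}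

lemma mem_support_reverse_append_cons {p : G.Walk a b} {q : G.Walk c d} (h : G.Adj a c)
    {x : V} : x ∈ (p.reverse.append (cons h q)).support ↔ x ∈ p.support ∨ x ∈ q.support := by
  simp only [mem_support_append_iff, support_reverse, List.mem_reverse, support_cons,
    List.mem_cons]
  constructor
  · rintro (hx | rfl | hx)
    exacts [Or.inl hx, Or.inl p.start_mem_support, Or.inr hx]
  · rintro (hx | hx)
    exacts [Or.inl hx, Or.inr (Or.inr hx)]

lemma IsPath.reverse_append_cons {p : G.Walk a b} {q : G.Walk c d} (hp : p.IsPath)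
    (hq : q.IsPath) (hpq : p.support.Disjoint q.support) (h : G.Adj a c) :
    (p.reverse.append (cons h q)).IsPath := by
  rw [isPath_def, support_append, support_reverse, support_cons, List.tail_cons]
  exact (List.nodup_reverse.2 hp.support_nodup).append hq.support_nodup
    (List.disjoint_reverse_left.2 hpq)

end SimpleGraph.Walk

namespace IsPathPartition

variable {V : Type*} {G : SimpleGraph V}

lemma eq_of_mem_support {n : ℕ} {P : Fin n → Σ u : V, Σ v : V, G.Walk u v}
    (hP : IsPathPartition G P) {x : V} {i j : Fin n} (hi : x ∈ (P i).2.2.support)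
    (hj : x ∈ (P j).2.2.support) : i = j :=
  (hP.2 x).unique hi hj

lemma update_comp_succAbove {m : ℕ} {P : Fin (m + 1) → Σ u : V, Σ v : V, G.Walk u v}
    (hP : IsPathPartition G P) {i j : Fin (m + 1)} (hij : i ≠ j)
    {w : Σ u : V, Σ v : V, G.Walk u v} (hw : w.2.2.IsPath)
    (hw_support : ∀ x, x ∈ w.2.2.support ↔ x ∈ (P i).2.2.support ∨ x ∈ (P j).2.2.support) :
    IsPathPartition G (Function.update P i w ∘ j.succAbove) := by
  refine ⟨fun k => ?_, fun x => ?_⟩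
  · by_cases hk : j.succAbove k = i
    · rwa [Function.comp_apply, hk, Function.update_self]
    · rw [Function.comp_apply, Function.update_of_ne hk]
      exact hP.1 _
  obtain ⟨c, hc, -⟩ := hP.2 x
  -- the new index of the path through `x`: the merged path sits at position `i`
  set c' := if c = j then i else c
  have hc'j : c' ≠ j := by grind
  have hmem : ∀ k, x ∈ (Function.update P i w (j.succAbove k)).2.2.support ↔
      j.succAbove k = c' := by
    intro k
    by_cases hk : j.succAbove k = i
    · rw [hk, Function.update_self, hw_support]
      grind [hP.eq_of_mem_support]
    · rw [Function.update_of_ne hk]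
      grind [hP.eq_of_mem_support, Fin.succAbove_ne]
  obtain ⟨k, hk⟩ := Fin.exists_succAbove_eq hc'j
  exact ⟨k, (hmem k).2 hk, fun l hl => j.succAbove_right_injective (((hmem l).1 hl).trans hk.symm)⟩

lemma not_adj_start_of_minimal {n : ℕ} {P : Fin n → Σ u : V, Σ v : V, G.Walk u v}
    (hP : IsPathPartition G P)
    (hmin : ∀ (m : ℕ) (Q : Fin m → Σ u : V, Σ v : V, G.Walk u v), IsPathPartition G Q → n ≤ m)
    (i j : Fin n) : ¬ G.Adj (P i).1 (P j).1 := by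
  intro hadj
  have hij : i ≠ j := fun h => G.ne_of_adj hadj (h ▸ rfl)
  obtain ⟨m, rfl⟩ : ∃ m, n = m + 1 := Nat.exists_eq_succ_of_ne_zero i.pos.ne'
  have hdisj : (P i).2.2.support.Disjoint (P j).2.2.support :=
    fun x hi hj => hij (hP.eq_of_mem_support hi hj)
  have hmerge := hP.update_comp_succAbove hij (w := ⟨_, _, _⟩)
    ((hP.1 i).reverse_append_cons (hP.1 j) hdisj hadj)
    (fun _ => Walk.mem_support_reverse_append_cons hadj)
  exact (hmin m _ hmerge).not_gt m.lt_succ_self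

end IsPathPartition

theorem stmt_4_general {V : Type*} (G : SimpleGraph V) {n : ℕ}
    (P : Fin n → Σ u : V, Σ v : V, G.Walk u v) (hP : IsPathPartition G P)
    (hmin : ∀ (m : ℕ) (Q : Fin m → Σ u : V, Σ v : V, G.Walk u v),
      IsPathPartition G Q → n ≤ m) :
    ∃ S : Set V, (∀ a ∈ S, ∀ b ∈ S, ¬ G.Adj a b) ∧
      ∀ i, ∃! x, x ∈ S ∧ x ∈ (P i).2.2.support := by
  refine ⟨Set.range fun i => (P i).1, ?_,
    fun i => ⟨(P i).1, ⟨⟨i, rfl⟩, Walk.start_mem_support _⟩, ?_⟩⟩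
  · rintro _ ⟨i, rfl⟩ _ ⟨j, rfl⟩
    exact hP.not_adj_start_of_minimal hmin i j
  · rintro _ ⟨⟨k, rfl⟩, hk⟩
    rw [hP.eq_of_mem_support (Walk.start_mem_support _) hk]

theorem stmt_4 {V : Type*} [Fintype V] (G : SimpleGraph V) {n : ℕ}
    (P : Fin n → Σ u : V, Σ v : V, G.Walk u v) (hP : IsPathPartition G P)
    (hmin : ∀ (m : ℕ) (Q : Fin m → Σ u : V, Σ v : V, G.Walk u v),
      IsPathPartition G Q → n ≤ m) :
    ∃ S : Set V, (∀ a ∈ S, ∀ b ∈ S, ¬ G.Adj a b) ∧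
      ∀ i, ∃! x, x ∈ S ∧ x ∈ (P i).2.2.support :=
  stmt_4_general G P hP hmin
end

section
/- Every connected graph G has a spanning tree T such that π_p(G) = π_p(T), where π_p denotes the path partition number. -/
open SimpleGraph

variable {V : Type*}

/-
Take a path partition of `G` with `π_p(G)` paths. Its paths are vertex-disjoint, so together
they form a forest, and any forest in a connected graph extends to a spanning tree `T`. The
partition is still a path partition of `T`, so `π_p(T) ≤ π_p(G)`; the reverse inequality holds
for every spanning subgraph.
-/

namespace SimpleGraph

variable {ι : Type*}

theorem Walk.IsPath.isAcyclic_spanningCoe_toSubgraph {G : SimpleGraph V} :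
    ∀ {u v : V} {p : G.Walk u v}, p.IsPath → p.toSubgraph.spanningCoe.IsAcyclic
  | _, _, .nil, _ => isAcyclic_bot.anti fun x y h => by simp at h
  | u, _, .cons (v := w) h q, hp => by
    rw [Walk.cons_isPath_iff] at hp
    have hunreach : ¬ q.toSubgraph.spanningCoe.Reachable u w := fun hr => by
      obtain ⟨y, hy⟩ := mem_support_of_reachable h.ne hr
      exact hp.2 (Walk.mem_support_of_adj_toSubgraph hy)
    have := hp.1.isAcyclic_spanningCoe_toSubgraph.sup_edge_of_not_reachable hunreach
    rwa [Walk.toSubgraph, Subgraph.sup_spanningCoe, sup_comm, Subgraph.spanningCoe_subgraphOfAdj]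

theorem Walk.edges_subset_edgeSet_of_pairwise_disjoint_support {H : ι → SimpleGraph V}
    (hH : Pairwise fun i j ↦ Disjoint (H i).support (H j).support) {i : ι} :
    ∀ {u v : V} (p : (⨆ i, H i).Walk u v), u ∈ (H i).support →
      ∀ e ∈ p.edges, e ∈ (H i).edgeSet
  | _, _, .nil, _ => by simp
  | _, _, .cons h q, hu => by
    obtain ⟨j, hj⟩ := iSup_adj.mp h
    obtain rfl : j = i := hH.eq (Set.not_disjoint_iff.mpr ⟨_, hj.left_mem_support, hu⟩)
    simpa [hj] using q.edges_subset_edgeSet_of_pairwise_disjoint_support hH hj.right_mem_support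

theorem isAcyclic_iSup_of_pairwise_disjoint_support {H : ι → SimpleGraph V}
    (hH : Pairwise fun i j ↦ Disjoint (H i).support (H j).support)
    (hacyc : ∀ i, (H i).IsAcyclic) : (⨆ i, H i).IsAcyclic := by
  intro u c hc
  obtain ⟨i, hi⟩ := iSup_adj.mp (c.adj_snd hc.not_nil)
  have hsub := c.edges_subset_edgeSet_of_pairwise_disjoint_support hH hi.left_mem_support
  exact hacyc i (c.transfer _ hsub) (hc.transfer hsub)

end SimpleGraph

section PathPartition

variable {G : SimpleGraph V} {n : ℕ} {P : Fin n → Σ u : V, Σ v : V, G.Walk u v}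

theorem isPathPartition_nil (e : V ≃ Fin n) :
    IsPathPartition G fun i => ⟨e.symm i, e.symm i, .nil⟩ :=
  ⟨fun _ => .nil, fun x => ⟨e x, by simp, fun j hj => by simp [List.mem_singleton.mp hj]⟩⟩

theorem IsPathPartition.transfer (hP : IsPathPartition G P) {H : SimpleGraph V}
    (hPH : ∀ i, ∀ e ∈ (P i).2.2.edges, e ∈ H.edgeSet) :
    IsPathPartition H fun i => ⟨(P i).1, (P i).2.1, (P i).2.2.transfer H (hPH i)⟩ :=
  ⟨fun i => (hP.1 i).transfer _, fun x => by simpa only [Walk.support_transfer] using hP.2 x⟩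

theorem IsPathPartition.isAcyclic_iSup_spanningCoe (hP : IsPathPartition G P) :
    (⨆ i, (P i).2.2.toSubgraph.spanningCoe).IsAcyclic := by
  have mem_support : ∀ {x} k, x ∈ (P k).2.2.toSubgraph.spanningCoe.support →
      x ∈ (P k).2.2.support := fun _ hx =>
    have ⟨_, hy⟩ := hx
    Walk.mem_support_of_adj_toSubgraph hy
  refine isAcyclic_iSup_of_pairwise_disjoint_support (fun i j hij => ?_)
    fun i => (hP.1 i).isAcyclic_spanningCoe_toSubgraph
  exact Set.disjoint_left.mpr fun x hxi hxj =>
    hij ((hP.2 x).unique (mem_support i hxi) (mem_support j hxj))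

theorem pathPartitionNum_le (hP : IsPathPartition G P) : pathPartitionNum G ≤ n :=
  Nat.sInf_le ⟨P, hP⟩

theorem exists_isPathPartition_pathPartitionNum [Finite V] (G : SimpleGraph V) :
    ∃ P : Fin (pathPartitionNum G) → Σ u : V, Σ v : V, G.Walk u v, IsPathPartition G P :=
  have hne : {n | ∃ P : Fin n → Σ u : V, Σ v : V, G.Walk u v, IsPathPartition G P}.Nonempty :=
    ⟨Nat.card V, _, isPathPartition_nil (Finite.equivFin V)⟩
  Nat.sInf_mem hne

theorem pathPartitionNum_le_of_le [Finite V] {H : SimpleGraph V} (h : H ≤ G) :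
    pathPartitionNum G ≤ pathPartitionNum H :=
  have ⟨Q, hQ⟩ := exists_isPathPartition_pathPartitionNum H
  pathPartitionNum_le <| hQ.transfer fun i _ he =>
    edgeSet_mono h ((Q i).2.2.edges_subset_edgeSet he)

end PathPartition

theorem stmt_14 {V : Type*} [Fintype V] (G : SimpleGraph V) (hconn : G.Connected) :
    ∃ T : SimpleGraph V, T ≤ G ∧ T.IsTree ∧ pathPartitionNum G = pathPartitionNum T := by
  obtain ⟨P, hP⟩ := exists_isPathPartition_pathPartitionNum G
  obtain ⟨T, hPT, hTG, hT⟩ := hconn.exists_isTree_le_of_le_of_isAcyclic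
    (iSup_le fun i => Subgraph.spanningCoe_le _) hP.isAcyclic_iSup_spanningCoe
  have hP_edges : ∀ i, ∀ e ∈ (P i).2.2.edges, e ∈ T.edgeSet := fun i _ he =>
    edgeSet_mono (le_trans (le_iSup _ i) hPT) ((P i).2.2.mem_edges_toSubgraph.mpr he)
  exact ⟨T, hTG, hT, le_antisymm (pathPartitionNum_le_of_le hTG)
    (pathPartitionNum_le (hP.transfer hP_edges))⟩
end
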